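/- arXiv:2603.04548 — 2 statements merged into one kernel-verified Lean document; each statement's English description precedes it below -/
import Mathlib

section
/- The number 1/√2 does not belong to the ring Z[1/(1-ζ)] = { A/(1-ζ)^k : A ∈ Z[ζ], k ∈ N }, where ζ = e^{2πi/9}. Consequently, the qubit Hadamard gate cannot be exactly emulated by a single-qutrit Clifford+T unitary (whose matrix entries must lie in this ring). -/
open Complex

noncomputable section

/-- The primitive ninth root of unity `ζ = e^{2πi/9}`. -/
def ζ : ℂ := Complex.exp (2 * Real.pi * Complex.I / 9)

/-- Membership in the ring `Z[1/(1-ζ)] = { A/(1-ζ)^k : A ∈ Z[ζ], k ∈ ℕ }`,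
where `Z[ζ]` consists of integer combinations of `1, ζ, …, ζ⁵`. -/
def InCliffordTRing (z : ℂ) : Prop :=
  ∃ (k : ℕ) (a : Fin 6 → ℤ), z = (∑ i : Fin 6, (a i : ℂ) * ζ ^ (i : ℕ)) / (1 - ζ) ^ k

open Polynomial in
lemma cyclotomic9_not_dvd (m : ℕ) :
    ¬ (cyclotomic 9 (ZMod 2) ∣ (X - C 1) ^ m) := by
  intro h
  have hcne : cyclotomic 9 (ZMod 2) ≠ 0 := cyclotomic_ne_zero 9 (ZMod 2)
  have hcnu : ¬ IsUnit (cyclotomic 9 (ZMod 2)) := by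
    intro hu
    have := natDegree_eq_zero_of_isUnit hu
    rw [natDegree_cyclotomic] at this
    exact absurd this (by decide)
  obtain ⟨p, hp, hpd⟩ := WfDvdMonoid.exists_irreducible_factor hcnu hcne
  have hpprime : Prime p := hp.prime
  have hpdvd : p ∣ (X - C 1 : (ZMod 2)[X]) ^ m := hpd.trans h
  have hpX : p ∣ (X - C 1 : (ZMod 2)[X]) := hpprime.dvd_of_dvd_pow hpdvd
  have hassoc : Associated p (X - C 1 : (ZMod 2)[X]) :=
    hp.associated_of_dvd (irreducible_X_sub_C (1 : ZMod 2)) hpX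
  have hXdvd : (X - C 1 : (ZMod 2)[X]) ∣ cyclotomic 9 (ZMod 2) :=
    hassoc.symm.dvd.trans hpd
  have hroot : IsRoot (cyclotomic 9 (ZMod 2)) 1 := dvd_iff_isRoot.mp hXdvd
  have hev : (eval 1 (cyclotomic (3 ^ (1 + 1)) (ZMod 2)) : ZMod 2) = ((3 : ℕ) : ZMod 2) :=
    eval_one_cyclotomic_prime_pow 1
  rw [show (3:ℕ) ^ (1+1) = 9 by norm_num] at hev
  rw [IsRoot.def] at hroot
  rw [hroot] at hev
  exact absurd hev.symm (by decide)

/-- `1/√2` does not lie in `Z[1/(1-ζ)]`; hence the qubit Hadamard gate (whose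
entries involve `1/√2`) cannot be exactly emulated by a single-qutrit Clifford+T
unitary, whose matrix entries all lie in this ring. -/
theorem inv_sqrt_two_not_in_ring :
    ¬ InCliffordTRing ((1 : ℂ) / (Real.sqrt 2 : ℂ)) := by
  rintro ⟨k, a, ha⟩
  have hprim : IsPrimitiveRoot ζ 9 := by
    have h9 : ((9:ℕ):ℂ) = (9:ℂ) := by norm_num
    have := Complex.isPrimitiveRoot_exp 9 (by norm_num)
    rw [h9] at this
    exact this
  have hζ1 : (1 : ℂ) - ζ ≠ 0 := by
    intro h
    have : ζ = 1 := by linear_combination -h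
    exact hprim.ne_one (by norm_num) this
  have hs2 : ((Real.sqrt 2 : ℝ) : ℂ) ^ 2 = 2 := by
    norm_cast
    rw [Real.sq_sqrt] <;> norm_num
  have hsne : ((Real.sqrt 2 : ℝ) : ℂ) ≠ 0 := by
    intro h
    rw [h] at hs2
    norm_num at hs2
  set S : ℂ := ∑ i : Fin 6, (a i : ℂ) * ζ ^ (i : ℕ) with hS
  have hpk : ((1:ℂ) - ζ) ^ k ≠ 0 := pow_ne_zero _ hζ1
  have h1 : (1 - ζ) ^ k = (Real.sqrt 2 : ℂ) * S := by
    field_simp at ha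
    linear_combination ha
  have key : (1 - ζ) ^ (2 * k) = 2 * S ^ 2 := by
    rw [mul_comm, pow_mul, h1]
    linear_combination (S ^ 2) * hs2
  set P : Polynomial ℤ :=
    (1 - Polynomial.X) ^ (2 * k) -
      Polynomial.C 2 * (∑ i : Fin 6, Polynomial.C (a i) * Polynomial.X ^ (i : ℕ)) ^ 2 with hP
  have haev : Polynomial.aeval ζ P = 0 := by
    rw [hS] at key
    simp only [hP, map_sub, map_pow, map_mul, map_sum, map_one, map_ofNat, map_intCast,
      Polynomial.aeval_X, Polynomial.aeval_C, algebraMap_int_eq, eq_intCast, Int.cast_ofNat]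
    push_cast
    linear_combination key
  have hint : IsIntegral ℤ ζ := hprim.isIntegral (by norm_num)
  have hmin : minpoly ℤ ζ ∣ P := minpoly.isIntegrallyClosed_dvd hint haev
  rw [← Polynomial.cyclotomic_eq_minpoly hprim (by norm_num)] at hmin
  have h2 : Polynomial.cyclotomic 9 (ZMod 2) ∣ P.map (Int.castRingHom (ZMod 2)) := by
    rw [← Polynomial.map_cyclotomic 9 (Int.castRingHom (ZMod 2))]
    exact Polynomial.map_dvd _ hmin
  have hPmap : P.map (Int.castRingHom (ZMod 2)) =
      (Polynomial.X - Polynomial.C 1) ^ (2 * k) := by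
    simp only [hP, Polynomial.map_sub, Polynomial.map_pow, Polynomial.map_mul,
      Polynomial.map_sum, Polynomial.map_one, Polynomial.map_X, Polynomial.map_C,
      map_intCast]
    rw [show ((Int.castRingHom (ZMod 2)) 2) = 0 from rfl]
    rw [show Polynomial.C (0 : ZMod 2) = 0 from map_zero _]
    rw [zero_mul, sub_zero]
    rw [show ((1:Polynomial (ZMod 2)) - Polynomial.X) = -(Polynomial.X - Polynomial.C 1) by
      rw [Polynomial.C_1]; ring]
    exact Even.neg_pow ⟨k, (two_mul k)⟩ _
  rw [hPmap] at h2
  exact cyclotomic9_not_dvd (2 * k) h2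
end
end

section
/- The n-ary binary AND (returning 1 iff all n Boolean inputs are 1) can be emulated by a qutrit reversible circuit composed of n−1 copies of a binary-AND-emulating bijection of Z₃², arranged in a binary tree: formally, for every n ≥ 1 there is a bijection h : Z₃ⁿ → Z₃ⁿ built as a composition of n−1 two-coordinate AND-emulating bijections such that for every (a₁,...,aₙ) ∈ {0,1}ⁿ, a designated output coordinate of h(a₁,...,aₙ) equals a₁ ∧ a₂ ∧ ... ∧ aₙ. -/
/-- Embedding of a bit as a qutrit value. -/
def b2z (b : Bool) : ZMod 3 := if b then 1 else 0

/-- Apply a two-trit map to coordinates `i, j` of `Z₃ⁿ` (identity elsewhere). -/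
def apply2 {n : ℕ} (g : ZMod 3 × ZMod 3 → ZMod 3 × ZMod 3) (i j : Fin n)
    (v : Fin n → ZMod 3) : Fin n → ZMod 3 :=
  fun t => if t = i then (g (v i, v j)).1 else if t = j then (g (v i, v j)).2 else v t

lemma apply2_inv {n : ℕ} (g g' : ZMod 3 × ZMod 3 → ZMod 3 × ZMod 3)
    (hgl : ∀ p, g' (g p) = p) (i j : Fin n) (hij : i ≠ j) (v : Fin n → ZMod 3) :
    apply2 g' i j (apply2 g i j v) = v := by
  have hji : j ≠ i := hij.symm
  have h1 : (apply2 g i j v) i = (g (v i, v j)).1 := by simp [apply2]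
  have h2 : (apply2 g i j v) j = (g (v i, v j)).2 := by simp [apply2, hji]
  funext t
  by_cases ht : t = i
  · subst ht; simp [apply2, hji, hgl]
  · by_cases ht2 : t = j
    · subst ht2; simp [apply2, hji, hgl]
    · simp [apply2, ht, ht2]

lemma apply2_bijective {n : ℕ} (g : ZMod 3 × ZMod 3 → ZMod 3 × ZMod 3)
    (hg : Function.Bijective g) (i j : Fin n) (hij : i ≠ j) :
    Function.Bijective (apply2 g i j) := by
  obtain ⟨g', hgl, hgr⟩ := Function.bijective_iff_has_inverse.mp hg
  exact Function.bijective_iff_has_inverse.mpr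
    ⟨apply2 g' i j, fun v => apply2_inv g g' hgl i j hij v,
      fun v => apply2_inv g' g hgr i j hij v⟩

/-- The `n`-ary binary AND is emulated by a qutrit reversible circuit made of
`n - 1` copies of any binary-AND-emulating bijection `g` of `Z₃²` (arranged in
a binary tree): for each `n ≥ 1` there is a bijection `h` of `Z₃ⁿ`, equal to a
composition of `n - 1` two-coordinate applications of `g`, and a designated
output coordinate carrying `a₁ ∧ ⋯ ∧ aₙ` for all Boolean inputs. -/
theorem nary_AND_emulation
    (g : ZMod 3 × ZMod 3 → ZMod 3 × ZMod 3)
    (hg_bij : Function.Bijective g)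
    (hg : ∀ a b : Bool, (g (b2z a, b2z b)).2 = b2z (a && b)) :
    ∀ n : ℕ, 1 ≤ n →
      ∃ (h : (Fin n → ZMod 3) → (Fin n → ZMod 3)) (out : Fin n)
        (L : List (Fin n × Fin n)),
        Function.Bijective h ∧
        L.length = n - 1 ∧
        (∀ p ∈ L, p.1 ≠ p.2) ∧
        h = (L.map fun p => apply2 g p.1 p.2).foldr (· ∘ ·) id ∧
        ∀ x : Fin n → Bool,
          h (fun i => b2z (x i)) out = b2z (decide (∀ i, x i = true)) := by
  intro n hn
  have hidxlt : ∀ k : ℕ, min k (n - 1) < n := fun k => by omega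
  set idx : ℕ → Fin n := fun k => ⟨min k (n - 1), hidxlt k⟩ with hidxdef
  have hidxval : ∀ k, k ≤ n - 1 → (idx k).val = k := by
    intro k hk; show min k (n - 1) = k; omega
  set F : ℕ → ((Fin n → ZMod 3) → (Fin n → ZMod 3)) :=
    fun m => ((List.range m).reverse.map
      (fun k => apply2 g (idx k) (idx (k + 1)))).foldr (· ∘ ·) id with hFdef
  have hFs : ∀ m, F (m + 1) = apply2 g (idx m) (idx (m + 1)) ∘ F m := by
    intro m
    simp [hFdef, List.range_succ]
  have hne : ∀ m, m + 1 ≤ n - 1 → idx m ≠ idx (m + 1) := by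
    intro m hm
    apply Fin.ne_of_val_ne
    rw [hidxval m (by omega), hidxval (m + 1) hm]
    omega
  refine ⟨F (n - 1), idx (n - 1),
    (List.range (n - 1)).reverse.map (fun k => (idx k, idx (k + 1))), ?_, ?_, ?_, ?_, ?_⟩
  · -- bijectivity
    have hbij : ∀ m, m ≤ n - 1 → Function.Bijective (F m) := by
      intro m
      induction m with
      | zero => intro _; exact Function.bijective_id
      | succ m ih =>
        intro hm
        rw [hFs]
        exact (apply2_bijective g hg_bij _ _ (hne m hm)).comp (ih (by omega))
    exact hbij (n - 1) le_rfl
  · simp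
  · intro p hp
    simp only [List.mem_map, List.mem_reverse, List.mem_range] at hp
    obtain ⟨k, hk, rfl⟩ := hp
    exact hne k (by omega)
  · rw [List.map_map]
    rfl
  · intro x
    have key : ∀ m, m ≤ n - 1 →
        (∀ t : Fin n, m < t.val → F m (fun i => b2z (x i)) t = b2z (x t)) ∧
        F m (fun i => b2z (x i)) (idx m)
          = b2z (decide (∀ i : Fin n, i.val ≤ m → x i = true)) := by
      intro m
      induction m with
      | zero =>
        intro _
        refine ⟨fun t ht => rfl, ?_⟩
        show b2z (x (idx 0)) = _
        have hiff : (x (idx 0) = true) ↔ (∀ i : Fin n, i.val ≤ 0 → x i = true) := by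
          constructor
          · intro h i hi
            have : i = idx 0 := Fin.ext (by show i.val = min 0 (n - 1); omega)
            rw [this]; exact h
          · intro h
            exact h _ (by show min 0 (n - 1) ≤ 0; omega)
        have : x (idx 0) = decide (x (idx 0) = true) := by simp
        rw [this, decide_eq_decide.mpr hiff]
      | succ m ih =>
        intro hm
        obtain ⟨ih1, ih2⟩ := ih (by omega)
        rw [hFs]
        set v := F m (fun i => b2z (x i)) with hv
        have hvj : v (idx (m + 1)) = b2z (x (idx (m + 1))) :=
          ih1 _ (by rw [hidxval (m + 1) hm]; omega)
        have hmne := hne m hm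
        constructor
        · intro t ht
          have ht1 : t ≠ idx m := Fin.ne_of_val_ne (by rw [hidxval m (by omega)]; omega)
          have ht2 : t ≠ idx (m + 1) := Fin.ne_of_val_ne (by rw [hidxval (m + 1) hm]; omega)
          show apply2 g (idx m) (idx (m + 1)) v t = _
          simp only [apply2, if_neg ht1, if_neg ht2]
          exact ih1 t (by omega)
        · show apply2 g (idx m) (idx (m + 1)) v (idx (m + 1)) = _
          simp only [apply2, if_neg hmne.symm, if_pos rfl]
          rw [ih2, hvj, hg]
          have hQ : ((∀ i : Fin n, i.val ≤ m → x i = true) ∧ x (idx (m + 1)) = true)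
              ↔ (∀ i : Fin n, i.val ≤ m + 1 → x i = true) := by
            constructor
            · rintro ⟨h1, h2⟩ i hi
              rcases Nat.lt_or_ge i.val (m + 1) with hlt | hge
              · exact h1 i (by omega)
              · have : i = idx (m + 1) := Fin.ext (by rw [hidxval (m + 1) hm]; omega)
                rw [this]; exact h2
            · intro h
              exact ⟨fun i hi => h i (by omega), h _ (by rw [hidxval (m + 1) hm])⟩
          have hb : (decide (∀ i : Fin n, i.val ≤ m → x i = true) && x (idx (m + 1)))
              = decide (∀ i : Fin n, i.val ≤ m + 1 → x i = true) := by
            by_cases hP' : (∀ i : Fin n, i.val ≤ m + 1 → x i = true)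
            · obtain ⟨h1, h2⟩ := hQ.mpr hP'
              rw [decide_eq_true h1, h2, decide_eq_true hP']
              rfl
            · rw [decide_eq_false hP']
              rcases Decidable.em (∀ i : Fin n, i.val ≤ m → x i = true) with h1 | h1
              · cases hx : x (idx (m + 1))
                · simp
                · exact absurd (hQ.mp ⟨h1, hx⟩) hP'
              · rw [decide_eq_false h1]; simp
          rw [hb]
          simp
    have := (key (n - 1) le_rfl).2
    rw [this]
    rw [decide_eq_decide.mpr (show (∀ i : Fin n, i.val ≤ n - 1 → x i = true) ↔ (∀ i, x i = true) from
      ⟨fun h i => h i (by omega), fun h i _ => h i⟩)]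
end
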